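/- arXiv:2301.06729 — 4 statements merged into one kernel-verified Lean document; each statement's English description precedes it below -/
import Mathlib

section
/- Let X be a real Banach space, D ⊆ X nonempty, K : D → 2^{X} a lower semicontinuous set-valued map, and F : X → 2^{X*} an upper semicontinuous set-valued map with nonempty compact values. Define Γ : D → 2^{X} by Γ(d) = S(F, K(d)). Then Γ has sequentially closed graph: if (d_n) ⊆ D with d_n → d ∈ D and y_n ∈ Γ(d_n) with y_n → y, then y ∈ Γ(d), i.e. there exists y* ∈ F(y) with ⟨y*, w − y⟩ ≥ 0 for all w ∈ K(d). -/
/-!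
STATEMENT 3: The solution map `Γ(d) = S(F, K(d))` of the parametric Stampacchia
variational inequality has a sequentially closed graph, when `K` is lower semicontinuous
and `F` is upper semicontinuous with nonempty compact values.
-/

/-- A set-valued map `K` is lower semicontinuous on `D` if for every `d ∈ D` and every open
set `V` meeting `K d`, the sets `K d'` meet `V` for all `d'` in `D` near `d`. -/
def SVLowerSemicontinuousOn {X Y : Type*} [TopologicalSpace X] [TopologicalSpace Y]
    (K : X → Set Y) (D : Set X) : Prop :=
  ∀ d ∈ D, ∀ V : Set Y, IsOpen V → (K d ∩ V).Nonempty →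
    ∀ᶠ d' in nhdsWithin d D, (K d' ∩ V).Nonempty

/-- The graph `{(d, x) : d ∈ D, x ∈ K d}` of the set-valued map `K` over `D` is closed. -/
def SVClosedGraphOn {X Y : Type*} [TopologicalSpace X] [TopologicalSpace Y]
    (K : X → Set Y) (D : Set X) : Prop :=
  IsClosed {p : X × Y | p.1 ∈ D ∧ p.2 ∈ K p.1}

/-- A set-valued map `F` is upper semicontinuous on `C` if for every `x ∈ C` and every open
set `V` containing `F x`, we have `F y ⊆ V` for all `y` in a neighbourhood of `x`. -/
def SVUpperSemicontinuousOn {X Y : Type*} [TopologicalSpace X] [TopologicalSpace Y]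
    (F : X → Set Y) (C : Set X) : Prop :=
  ∀ x ∈ C, ∀ V : Set Y, IsOpen V → F x ⊆ V → ∀ᶠ y in nhds x, F y ⊆ V

/-- `F : X → 2^{X*}` is pseudomonotone on `C`: for `x, y ∈ C`, if some `x* ∈ F x` satisfies
`⟨x*, y - x⟩ ≥ 0`, then `⟨y*, y - x⟩ ≥ 0` for all `y* ∈ F y`. -/
def Pseudomonotone {X : Type*} [NormedAddCommGroup X] [NormedSpace ℝ X]
    (F : X → Set (X →L[ℝ] ℝ)) (C : Set X) : Prop :=
  ∀ x ∈ C, ∀ y ∈ C, (∃ xs ∈ F x, 0 ≤ xs (y - x)) → ∀ ys ∈ F y, 0 ≤ ys (y - x)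

/-- The Stampacchia solution set `S(T, C)` of the variational inequality defined by
`T : X → 2^{X*}` on `C ⊆ X`. -/
def StampacchiaSol {X : Type*} [NormedAddCommGroup X] [NormedSpace ℝ X]
    (T : X → Set (X →L[ℝ] ℝ)) (C : Set X) : Set X :=
  {x ∈ C | ∃ xs ∈ T x, ∀ y ∈ C, 0 ≤ xs (y - x)}

/-- **Lemma (sequentially closed graph of the solution map).**
Let `X` be a real Banach space, `D ⊆ X` nonempty, `K : D → 2^{X}` lower semicontinuous,
and `F : X → 2^{X*}` upper semicontinuous with nonempty compact values. Let
`Γ(d) = S(F, K d)`. If `d_n ∈ D`, `d_n → d ∈ D`, `y_n ∈ Γ(d_n)` and `y_n → y`, then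
`y ∈ Γ(d)` in the sense that there exists `y* ∈ F y` with `⟨y*, w - y⟩ ≥ 0` for all
`w ∈ K d`. -/
theorem solution_map_sequentially_closed_graph
    {X : Type*} [NormedAddCommGroup X] [NormedSpace ℝ X] [CompleteSpace X]
    (D : Set X) (hDne : D.Nonempty)
    (K : X → Set X) (hKlsc : SVLowerSemicontinuousOn K D)
    (F : X → Set (X →L[ℝ] ℝ))
    (hFne : ∀ x, (F x).Nonempty)
    (hFcpt : ∀ x, IsCompact (F x))
    (hFusc : SVUpperSemicontinuousOn F Set.univ)
    (d : ℕ → X) (hdD : ∀ n, d n ∈ D)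
    (dlim : X) (hdlim : dlim ∈ D) (hdconv : Filter.Tendsto d Filter.atTop (nhds dlim))
    (y : ℕ → X) (hy : ∀ n, y n ∈ StampacchiaSol F (K (d n)))
    (ylim : X) (hyconv : Filter.Tendsto y Filter.atTop (nhds ylim)) :
    ∃ ys ∈ F ylim, ∀ w ∈ K dlim, 0 ≤ ys (w - ylim) := by
  classical
  choose ys hysF hysI using fun n => (hy n).2
  -- A uniform norm bound on F ylim, and eventually on ys n
  obtain ⟨C, hC⟩ := ((hFcpt ylim).isBounded).exists_norm_le
  set M : ℝ := max C 0 + 1 with hMdef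
  have hM0 : (0 : ℝ) < M := by positivity
  have hFsubball : F ylim ⊆ Metric.ball (0 : X →L[ℝ] ℝ) M := by
    intro f hf
    rw [mem_ball_zero_iff]
    have h1 : ‖f‖ ≤ C := hC f hf
    have h2 : C ≤ max C 0 := le_max_left _ _
    linarith
  have hMev : ∀ᶠ n in Filter.atTop, ‖ys n‖ < M := by
    have h1 := hFusc ylim (Set.mem_univ _) _ Metric.isOpen_ball hFsubball
    filter_upwards [hyconv.eventually h1] with n hn
    exact mem_ball_zero_iff.1 (hn (hysF n))
  have hdtend : Filter.Tendsto d Filter.atTop (nhdsWithin dlim D) :=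
    tendsto_nhdsWithin_of_tendsto_nhds_of_eventually_within _ hdconv
      (Filter.Eventually.of_forall hdD)
  -- the key finite-intersection step
  have key : ∀ u : Finset (K dlim),
      (F ylim ∩ ⋂ w ∈ u, {f : X →L[ℝ] ℝ | 0 ≤ f ((w : X) - ylim)}).Nonempty := by
    intro u
    by_contra hcon
    have hforall : ∀ f ∈ F ylim, ∃ w ∈ u, f ((w : X) - ylim) < 0 := by
      intro f hf
      by_contra h
      push_neg at h
      exact hcon ⟨f, hf, Set.mem_iInter₂.2 fun w hw => h w hw⟩
    have hune : u.Nonempty := by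
      obtain ⟨f, hf⟩ := hFne ylim
      obtain ⟨w, hw, _⟩ := hforall f hf
      exact ⟨w, hw⟩
    set g : (X →L[ℝ] ℝ) → ℝ := fun f => u.inf' hune fun w => f ((w : X) - ylim) with hg
    have hgcont : Continuous g :=
      Continuous.finset_inf'_apply hune fun w _ =>
        (ContinuousLinearMap.apply ℝ ℝ ((w : X) - ylim)).continuous
    obtain ⟨f0, hf0, hf0max⟩ := (hFcpt ylim).exists_isMaxOn (hFne ylim) hgcont.continuousOn
    set ε : ℝ := -(g f0) with hε
    have hεpos : 0 < ε := by
      obtain ⟨w, hw, hwlt⟩ := hforall f0 hf0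
      have h1 : g f0 ≤ f0 ((w : X) - ylim) := Finset.inf'_le _ hw
      simp only [hε]; linarith
    have hVopen : IsOpen {f : X →L[ℝ] ℝ | g f < -(ε/2)} := isOpen_lt hgcont continuous_const
    have hFV : F ylim ⊆ {f : X →L[ℝ] ℝ | g f < -(ε/2)} := by
      intro f hf
      have h2 : g f ≤ g f0 := hf0max hf
      simp only [Set.mem_setOf_eq]
      linarith
    have hVev : ∀ᶠ n in Filter.atTop, g (ys n) < -(ε/2) := by
      have h1 := hFusc ylim (Set.mem_univ _) _ hVopen hFV
      filter_upwards [hyconv.eventually h1] with n hn using hn (hysF n)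
    set δ : ℝ := ε / (8 * M) with hδ
    have hδpos : 0 < δ := by positivity
    have hKev : ∀ᶠ n in Filter.atTop,
        ∀ w ∈ u, (K (d n) ∩ Metric.ball (w : X) δ).Nonempty := by
      rw [Filter.eventually_all_finset]
      intro w _
      exact hdtend.eventually <| hKlsc dlim hdlim (Metric.ball (w : X) δ) Metric.isOpen_ball
        ⟨(w : X), w.2, Metric.mem_ball_self hδpos⟩
    have hyev : ∀ᶠ n in Filter.atTop, ‖y n - ylim‖ < δ := by
      filter_upwards [Metric.tendsto_nhds.mp hyconv δ hδpos] with n hn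
      rwa [dist_eq_norm] at hn
    obtain ⟨n, hnM, hnV, hnK, hny⟩ : ∃ n, ‖ys n‖ < M ∧ g (ys n) < -(ε/2) ∧
        (∀ w ∈ u, (K (d n) ∩ Metric.ball (w : X) δ).Nonempty) ∧ ‖y n - ylim‖ < δ :=
      (hMev.and (hVev.and (hKev.and hyev))).exists
    obtain ⟨w, hwu, hwlt⟩ := Finset.exists_mem_eq_inf' hune fun w => ys n ((w : X) - ylim)
    have hglt : ys n ((w : X) - ylim) < -(ε/2) := by
      have hnV' : (u.inf' hune fun w => ys n ((w : X) - ylim)) < -(ε/2) := hnV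
      rwa [hwlt] at hnV'
    obtain ⟨z, hzK, hzb⟩ := hnK w hwu
    have h0 : 0 ≤ ys n (z - y n) := hysI n z hzK
    have hdiff : ‖((w : X) - ylim) - (z - y n)‖ < 2 * δ := by
      have h1 : ((w : X) - ylim) - (z - y n) = ((w : X) - z) + (y n - ylim) := by abel
      rw [h1]
      have h2 : ‖(w : X) - z‖ < δ := by
        have := Metric.mem_ball.1 hzb
        rw [dist_comm, dist_eq_norm] at this
        exact this
      calc ‖((w : X) - z) + (y n - ylim)‖ ≤ ‖(w : X) - z‖ + ‖y n - ylim‖ := norm_add_le _ _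
        _ < δ + δ := by linarith
        _ = 2 * δ := by ring
    have hbound : |ys n (((w : X) - ylim) - (z - y n))| ≤ ‖ys n‖ * ‖((w : X) - ylim) - (z - y n)‖ := by
      rw [← Real.norm_eq_abs]
      exact (ys n).le_opNorm _
    have habs : ‖ys n‖ * ‖((w : X) - ylim) - (z - y n)‖ ≤ M * (2 * δ) := by
      have hn0 : (0 : ℝ) ≤ ‖ys n‖ := norm_nonneg _
      have hd0 : (0 : ℝ) ≤ ‖((w : X) - ylim) - (z - y n)‖ := norm_nonneg _
      nlinarith
    have hsplit : ys n ((w : X) - ylim) = ys n (z - y n) + ys n (((w : X) - ylim) - (z - y n)) := by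
      rw [← map_add]
      congr 1
      abel
    have hMδ : M * (2 * δ) = ε / 4 := by
      rw [hδ]; field_simp; ring
    have := abs_le.1 hbound
    nlinarith [this.1, this.2]
  -- conclude by compactness
  have hfinal := (hFcpt ylim).inter_iInter_nonempty
    (fun w : K dlim => {f : X →L[ℝ] ℝ | 0 ≤ f ((w : X) - ylim)})
    (fun w => isClosed_le continuous_const
      (ContinuousLinearMap.apply ℝ ℝ ((w : X) - ylim)).continuous)
    key
  obtain ⟨f, hf, hfZ⟩ := hfinal
  refine ⟨f, hf, fun w hw => ?_⟩
  have := Set.mem_iInter.1 hfZ ⟨w, hw⟩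
  exact this
end

section
/- Let X be a real Banach space, C ⊆ X a nonempty convex set, r > 0, and F : X → 2^{X*} a set-valued map. Suppose x̃ ∈ C ∩ B̄(0,r) and x̃* ∈ F(x̃) satisfy ⟨x̃*, x − x̃⟩ ≥ 0 for all x ∈ C ∩ B̄(0,r), and suppose there exists ỹ ∈ C ∩ B(0,r) (with ‖ỹ‖ < r) such that ⟨x*, x̃ − ỹ⟩ ≥ 0 for all x* ∈ F(x̃). Then ⟨x̃*, z − x̃⟩ ≥ 0 for all z ∈ C, i.e. x̃ solves the Stampacchia variational inequality over all of C. -/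
/-!
STATEMENT 6: A solution of the variational inequality on the truncated set
`C ∩ B̄(0,r)` which also satisfies the coercivity inequality with some
`ỹ ∈ C ∩ B(0,r)` solves the variational inequality on all of `C`.
-/

/-- **Lemma (from the truncated VI to the full VI).**
Let `X` be a real Banach space, `C ⊆ X` a nonempty convex set, `r > 0`, and
`F : X → 2^{X*}`. Suppose `x̃ ∈ C ∩ B̄(0,r)` and `x̃* ∈ F x̃` satisfy
`⟨x̃*, x − x̃⟩ ≥ 0` for all `x ∈ C ∩ B̄(0,r)`, and there exists `ỹ ∈ C` with `‖ỹ‖ < r`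
such that `⟨x*, x̃ − ỹ⟩ ≥ 0` for all `x* ∈ F x̃`. Then `⟨x̃*, z − x̃⟩ ≥ 0` for all `z ∈ C`. -/
theorem truncated_vi_solves_full_vi
    {X : Type*} [NormedAddCommGroup X] [NormedSpace ℝ X] [CompleteSpace X]
    (C : Set X) (hCne : C.Nonempty) (hCconv : Convex ℝ C)
    (r : ℝ) (hr : 0 < r)
    (F : X → Set (X →L[ℝ] ℝ))
    (xt : X) (hxt : xt ∈ C ∩ Metric.closedBall 0 r)
    (xs : X →L[ℝ] ℝ) (hxs : xs ∈ F xt)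
    (hVI : ∀ x ∈ C ∩ Metric.closedBall 0 r, 0 ≤ xs (x - xt))
    (yt : X) (hyt : yt ∈ C) (hytr : ‖yt‖ < r)
    (hcoer : ∀ x' ∈ F xt, 0 ≤ x' (xt - yt)) :
    ∀ z ∈ C, 0 ≤ xs (z - xt) := by
  intro z hz
  -- ỹ is in the truncated set
  have hytball : yt ∈ C ∩ Metric.closedBall 0 r := by
    refine ⟨hyt, ?_⟩
    simpa [Metric.mem_closedBall, dist_eq_norm] using hytr.le
  -- xs (ỹ - x̃) = 0
  have h1 : 0 ≤ xs (yt - xt) := hVI yt hytball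
  have h2 : 0 ≤ xs (xt - yt) := hcoer xs hxs
  have h2' : xs (xt - yt) = - xs (yt - xt) := by
    rw [← map_neg]; congr 1; abel
  have hzero : xs (yt - xt) = 0 := le_antisymm (by linarith [h2, h2']) h1
  -- choose small t
  set t : ℝ := min 1 ((r - ‖yt‖) / (2 * (‖z - yt‖ + 1))) with ht
  have hden : (0:ℝ) < 2 * (‖z - yt‖ + 1) := by positivity
  have htpos : 0 < t := lt_min one_pos (div_pos (by linarith) hden)
  have ht1 : t ≤ 1 := min_le_left _ _
  have htle : t * ‖z - yt‖ < r - ‖yt‖ := by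
    have h : t ≤ (r - ‖yt‖) / (2 * (‖z - yt‖ + 1)) := min_le_right _ _
    calc t * ‖z - yt‖ ≤ (r - ‖yt‖) / (2 * (‖z - yt‖ + 1)) * ‖z - yt‖ :=
          mul_le_mul_of_nonneg_right h (norm_nonneg _)
      _ < r - ‖yt‖ := by
          rw [div_mul_eq_mul_div, div_lt_iff₀ hden]
          nlinarith [norm_nonneg (z - yt)]
  -- the point w
  set w : X := yt + t • (z - yt) with hw
  have hwC : w ∈ C := by
    have := hCconv hyt hz (by linarith : (0:ℝ) ≤ 1 - t) htpos.le (by ring)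
    convert this using 1
    rw [hw]
    module
  have hwball : w ∈ Metric.closedBall 0 r := by
    simp only [Metric.mem_closedBall, dist_zero_right]
    calc ‖w‖ ≤ ‖yt‖ + ‖t • (z - yt)‖ := norm_add_le _ _
      _ = ‖yt‖ + t * ‖z - yt‖ := by rw [norm_smul, Real.norm_eq_abs, abs_of_pos htpos]
      _ ≤ r := by linarith
  have hVIw : 0 ≤ xs (w - xt) := hVI w ⟨hwC, hwball⟩
  have hsplit : xs (w - xt) = xs (yt - xt) + t * xs (z - yt) := by
    rw [hw, show yt + t • (z - yt) - xt = (yt - xt) + t • (z - yt) by abel,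
      map_add, map_smul, smul_eq_mul]
  have hzy : 0 ≤ xs (z - yt) := by
    rw [hsplit, hzero, zero_add] at hVIw
    exact nonneg_of_mul_nonneg_right hVIw htpos
  have : xs (z - xt) = xs (z - yt) + xs (yt - xt) := by
    rw [← map_add]; congr 1; abel
  rw [this, hzero]; linarith
end

section
/- In the time-dependent pure exchange economy with n agents and m goods over [0,T], assume each u_i satisfies (A1): u_i(t,w) is measurable in t for each w; u_i(t,·) is concave for a.e. t; u_i(t,·) ∈ C¹(ℝ^m_+) for a.e. t; each partial derivative ∂u_i/∂x_i^j is measurable in t and ‖∇u_i(t,w)‖ ≤ C_i‖w‖ + g(t) for all w ∈ ℝ^m_+ and a.e. t, with C_i > 0 and g ∈ L²([0,T],ℝ_+). If (p̄, x̄) ∈ D̃ × ∏_i K̃_i(p̄) is a solution of the quasi-variational inequality: ⟪Σ_{i=1}^{n}(e_i − x̄_i), p − p̄⟫_m + Σ_{i=1}^{n} ⟪−∇u_i(·, x̄_i(·)), y_i − x̄_i⟫_m ≥ 0 for all (p, y) ∈ D̃ × ∏_i K̃_i(p̄), then (p̄, x̄) is a dynamic competitive equilibrium: each x̄_i maximizes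 𝒰_i over M_i(p̄), and ∫_0^T Σ_i (x̄_i^j(t) − e_i^j(t)) dt ≤ 0 for every good j. -/
/-!
STATEMENT 8: In the time-dependent pure exchange economy, under assumption (A1),
any solution of the quasi-variational inequality (over the price set `D̃` and the
truncated budget sets `K̃_i(p̄)`) is a dynamic competitive equilibrium.

The price set `D̃` is abstracted as a set `Dt` of prices whose members are nonnegative
with components summing to one a.e., and which contains, for each good `j`, the constant
unit price of good `j` (these are the defining properties of `D̃` used here).
-/

open MeasureTheory
open scoped RealInnerProductSpace

noncomputable section

/-- Lebesgue measure restricted to the time interval `[0, T]`. -/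
def timeMeasure (T : ℝ) : Measure ℝ := volume.restrict (Set.Icc 0 T)

/-- The commodity space `L = L²([0,T], ℝ^m)`, with its `L²` (real) inner product
`⟪h, g⟫ = ∫₀ᵀ ⟨h t, g t⟩ dt`. -/
abbrev EcoL (m : ℕ) (T : ℝ) := Lp (EuclideanSpace ℝ (Fin m)) 2 (timeMeasure T)

/-- The ordered cone `C_L = {α ∈ L : αʲ(t) ≥ 0 for a.e. t, for all goods j}`. -/
def CL (m : ℕ) (T : ℝ) : Set (EcoL m T) :=
  {x | ∀ j : Fin m, ∀ᵐ t ∂(timeMeasure T), 0 ≤ x t j}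

/-- The budget set `M_i(p) = {x ∈ C_L : ⟪p, x − e_i⟫ ≤ 0}` of an agent with endowment `e`. -/
def budgetSet (m : ℕ) (T : ℝ) (e p : EcoL m T) : Set (EcoL m T) :=
  {x ∈ CL m T | ⟪p, x - e⟫ ≤ 0}

/-- The truncation set `H = ∏_j H_j`, where
`H_j = {α ∈ L²([0,T],ℝ) : α(t) ≥ 0 a.e., ∫₀ᵀ α(t) dt ≤ r_j}`. -/
def Hset (m : ℕ) (T : ℝ) (r : Fin m → ℝ) : Set (EcoL m T) :=
  {x | ∀ j : Fin m, (∀ᵐ t ∂(timeMeasure T), 0 ≤ x t j) ∧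
    ∫ t, x t j ∂(timeMeasure T) ≤ r j}

/-- The truncated budget set `K̃_i(p) = M_i(p) ∩ H`. -/
def truncBudget (m : ℕ) (T : ℝ) (e : EcoL m T) (r : Fin m → ℝ) (p : EcoL m T) :
    Set (EcoL m T) :=
  budgetSet m T e p ∩ Hset m T r

/-- The mean value utility `𝒰(x) = ∫₀ᵀ u(t, x(t)) dt`. -/
def meanUtility (m : ℕ) (T : ℝ) (u : ℝ → EuclideanSpace ℝ (Fin m) → ℝ) (x : EcoL m T) : ℝ :=
  ∫ t, u t (x t) ∂(timeMeasure T)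

/-- Assumption (A1) on a utility function `u`, with gradient (in the second variable) `G`:
`u(t,w)` is measurable in `t` for each `w`; `u(t,·)` is concave on `ℝ^m₊` for a.e. `t`;
`u(t,·)` is `C¹` on `ℝ^m₊` (with gradient `G(t,·)`) for a.e. `t`; `G(·,w)` is measurable for
each `w`; and the growth condition `‖∇u(t,w)‖ ≤ C‖w‖ + g(t)` holds on `ℝ^m₊` for a.e. `t`,
for some `C > 0` and some nonnegative `g ∈ L²([0,T],ℝ)`. -/
def AssumptionA1 (m : ℕ) (T : ℝ) (u : ℝ → EuclideanSpace ℝ (Fin m) → ℝ)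
    (G : ℝ → EuclideanSpace ℝ (Fin m) → EuclideanSpace ℝ (Fin m)) : Prop :=
  (∀ w, Measurable fun t => u t w) ∧
  (∀ᵐ t ∂(timeMeasure T), ConcaveOn ℝ {w : EuclideanSpace ℝ (Fin m) | ∀ j, 0 ≤ w j} (u t)) ∧
  (∀ᵐ t ∂(timeMeasure T), ∀ w : EuclideanSpace ℝ (Fin m), (∀ j, 0 ≤ w j) →
    HasGradientAt (u t) (G t w) w) ∧
  (∀ w, Measurable fun t => G t w) ∧
  (∃ C > (0:ℝ), ∃ g : ℝ → ℝ, MemLp g 2 (timeMeasure T) ∧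
    (∀ᵐ t ∂(timeMeasure T), 0 ≤ g t) ∧
    (∀ᵐ t ∂(timeMeasure T), ∀ w : EuclideanSpace ℝ (Fin m), (∀ j, 0 ≤ w j) →
      ‖G t w‖ ≤ C * ‖w‖ + g t))

/-!
Testing the quasi-variational inequality with `y = x̄` and with `p` the unit price of good `j`,
and using the budget constraints at `p̄`, gives market clearing; in particular every `x̄ᵢ`
satisfies the truncation constraints `∫ x̄ᵢʲ < rⱼ` strictly. Testing it with `p = p̄` and `y`
differing from `x̄` only in agent `i` gives the first-order condition
`∫ ⟪∇uᵢ(·, x̄ᵢ), z − x̄ᵢ⟫ ≤ 0` on `K̃ᵢ(p̄)`. As `K̃ᵢ(p̄)` contains a segment from `x̄ᵢ` towards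
every point of the convex set `Mᵢ(p̄)`, the condition holds on all of `Mᵢ(p̄)`, and concavity of
`uᵢ(t, ·)` turns it into optimality of `x̄ᵢ`. The growth bound on `∇uᵢ` makes every integrand
integrable, via the mean value theorem on segments.
-/

open Filter Topology

instance (T : ℝ) : IsFiniteMeasure (timeMeasure T) :=
  isFiniteMeasure_restrict.2 measure_Icc_lt_top.ne

section Gradient

variable {E : Type*} [NormedAddCommGroup E] [InnerProductSpace ℝ E] [CompleteSpace E]
  {f : E → ℝ} {v x y : E}

theorem HasGradientAt.hasDerivAt_comp_lineMap (hf : HasGradientAt f v x) (y : E) :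
    HasDerivAt (fun s : ℝ => f (AffineMap.lineMap x y s)) ⟪v, y - x⟫ 0 := by
  have hf' : HasFDerivAt f (InnerProductSpace.toDual ℝ E v) (AffineMap.lineMap x y (0 : ℝ)) := by
    simpa using hf.hasFDerivAt
  have := hf'.comp_hasDerivAt (0 : ℝ) AffineMap.hasDerivAt_lineMap
  rw [InnerProductSpace.toDual_apply_apply] at this
  exact this

theorem ConcaveOn.le_add_inner_of_hasGradientAt {S : Set E} (hf : ConcaveOn ℝ S f)
    (hx : x ∈ S) (hy : y ∈ S) (hv : HasGradientAt f v x) : f y ≤ f x + ⟪v, y - x⟫ := by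
  have hline : ConcaveOn ℝ (Set.Icc 0 1) (fun s : ℝ => f (AffineMap.lineMap x y s)) :=
    (hf.comp_affineMap (AffineMap.lineMap x y)).subset
      (fun s hs => hf.1.lineMap_mem hx hy hs) (convex_Icc 0 1)
  have := hline.slope_le_of_hasDerivAt (by simp) (by simp) zero_lt_one
    (hv.hasDerivAt_comp_lineMap y)
  simp only [slope_def_field, AffineMap.lineMap_apply_one, AffineMap.lineMap_apply_zero,
    sub_zero, div_one] at this
  linarith

theorem HasGradientAt.tendsto_slope_lineMap (hf : HasGradientAt f v x) (y : E) :
    Tendsto (fun k : ℕ => ((k : ℝ) + 1) * (f (AffineMap.lineMap x y ((k : ℝ) + 1)⁻¹) - f x))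
      atTop (𝓝 ⟪v, y - x⟫) := by
  have hseq : Tendsto (fun k : ℕ => ((k : ℝ) + 1)⁻¹) atTop (𝓝[≠] 0) :=
    tendsto_nhdsWithin_of_tendsto_nhds_of_eventually_within _
      (by simpa [one_div] using tendsto_one_div_add_atTop_nhds_zero_nat (𝕜 := ℝ))
      (Eventually.of_forall fun k => inv_ne_zero (Nat.cast_add_one_ne_zero k))
  refine ((hasDerivAt_iff_tendsto_slope.1 (hf.hasDerivAt_comp_lineMap y)).comp hseq).congr
    fun k => ?_
  simp [slope_def_field, div_eq_inv_mul]

theorem Convex.abs_sub_le_of_norm_gradient_le {S : Set E} (hS : Convex ℝ S) {f' : E → E}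
    (hf : ∀ w ∈ S, HasGradientAt f (f' w) w) {C : ℝ} (hC : ∀ w ∈ S, ‖f' w‖ ≤ C)
    (hx : x ∈ S) (hy : y ∈ S) : |f y - f x| ≤ C * ‖y - x‖ := by
  simpa [Real.norm_eq_abs] using hS.norm_image_sub_le_of_norm_hasFDerivWithin_le
    (f' := fun w => InnerProductSpace.toDual ℝ E (f' w))
    (fun w hw => (hf w hw).hasFDerivAt.hasFDerivWithinAt)
    (fun w hw => by simpa using hC w hw) hx hy

end Gradient

section Caratheodory

variable {α E : Type*} [MeasurableSpace α] {μ : Measure α} {u : α → E → ℝ}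

theorem measurable_comp_simpleFunc (hu : ∀ w, Measurable fun t => u t w) (s : SimpleFunc α E) :
    Measurable fun t => u t (s t) := by
  classical
  have h : (fun t => u t (s t)) =
      fun t => ∑ c ∈ s.range, (s ⁻¹' {c}).indicator (fun t' => u t' c) t := by
    funext t
    simp only [Set.indicator_apply, Set.mem_preimage, Set.mem_singleton_iff]
    rw [Finset.sum_ite_eq s.range (s t) (fun c => u t c)]
    simp
  rw [h]
  exact Finset.measurable_sum _ fun c _ => (hu c).indicator (s.measurableSet_fiber c)

theorem aemeasurable_comp_of_continuousAt [TopologicalSpace E]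
    [TopologicalSpace.PseudoMetrizableSpace E] (hu : ∀ w, Measurable fun t => u t w)
    {x : α → E} (hx : AEStronglyMeasurable x μ) (hc : ∀ᵐ t ∂μ, ContinuousAt (u t) (x t)) :
    AEMeasurable (fun t => u t (x t)) μ := by
  obtain ⟨x', hx'm, hxx'⟩ := hx
  refine aemeasurable_of_tendsto_metrizable_ae atTop
    (fun k => (measurable_comp_simpleFunc hu (hx'm.approx k)).aemeasurable) ?_
  filter_upwards [hc, hxx'] with t hct hxt
  rw [hxt] at hct ⊢
  exact hct.tendsto.comp (hx'm.tendsto_approx t)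

end Caratheodory

theorem integral_le_integral_of_integrable_sub {α : Type*} [MeasurableSpace α]
    {μ : Measure α} {f g : α → ℝ} (hfg : Integrable (fun t => f t - g t) μ)
    (hle : ∫ t, (f t - g t) ∂μ ≤ 0) : ∫ t, f t ∂μ ≤ ∫ t, g t ∂μ := by
  -- when `g` is not integrable, neither is `f`, and both integrals are the junk value `0`
  by_cases hg : Integrable g μ
  · have hf : Integrable f μ := (hfg.add hg).congr (.of_forall fun t => by simp)
    rwa [integral_sub hf hg, sub_nonpos] at hle
  · have hf : ¬ Integrable f μ := fun hf =>
      hg ((hf.sub hfg).congr (.of_forall fun t => by simp))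
    rw [integral_undef hf, integral_undef hg]

section ConcaveIntegrand

variable {α E : Type*} [MeasurableSpace α] {μ : Measure α}
  [NormedAddCommGroup E] [InnerProductSpace ℝ E] [CompleteSpace E]
  {u : α → E → ℝ} {G : α → E → E} {K : α → ℝ} {x xb : α → E}

/-- The gradient term is measurable although `G` is only measurable in `t` for fixed `w`:
it is the pointwise limit of difference quotients of `u`. -/
theorem aemeasurable_inner_gradient (hu : ∀ w, Measurable fun t => u t w)
    (hgrad : ∀ᵐ t ∂μ, ∀ w ∈ segment ℝ (xb t) (x t), HasGradientAt (u t) (G t w) w)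
    (hx : AEStronglyMeasurable x μ) (hxb : AEStronglyMeasurable xb μ) :
    AEMeasurable (fun t => ⟪G t (xb t), x t - xb t⟫) μ := by
  refine aemeasurable_of_tendsto_metrizable_ae atTop (fun k => ?_)
    (hgrad.mono fun t ht => (ht _ (left_mem_segment ℝ _ _)).tendsto_slope_lineMap (x t))
  have hk : ((k : ℝ) + 1)⁻¹ ∈ Set.Icc (0 : ℝ) 1 :=
    ⟨by positivity, inv_le_one_of_one_le₀ (by simp)⟩
  have hline : AEStronglyMeasurable
      (fun t => AffineMap.lineMap (xb t) (x t) ((k : ℝ) + 1)⁻¹) μ := by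
    simp_rw [AffineMap.lineMap_apply_module]
    exact (hxb.const_smul _).add (hx.const_smul _)
  have hcont : ∀ s ∈ Set.Icc (0 : ℝ) 1,
      ∀ᵐ t ∂μ, ContinuousAt (u t) (AffineMap.lineMap (xb t) (x t) s) :=
    fun s hs => hgrad.mono fun t ht =>
      (ht _ (lineMap_mem_segment ℝ _ _ hs)).hasFDerivAt.continuousAt
  refine ((aemeasurable_comp_of_continuousAt hu hline (hcont _ hk)).sub
    (aemeasurable_comp_of_continuousAt hu hxb ?_)).const_mul _
  simpa using hcont 0 (by simp)

theorem integrable_sub_comp_of_norm_gradient_le (hu : ∀ w, Measurable fun t => u t w)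
    (hgrad : ∀ᵐ t ∂μ, ∀ w ∈ segment ℝ (xb t) (x t), HasGradientAt (u t) (G t w) w)
    (hbound : ∀ᵐ t ∂μ, ∀ w ∈ segment ℝ (xb t) (x t), ‖G t w‖ ≤ K t)
    (hK : MemLp K 2 μ) (hx : MemLp x 2 μ) (hxb : MemLp xb 2 μ) :
    Integrable (fun t => u t (x t) - u t (xb t)) μ := by
  have hcont : ∀ᵐ t ∂μ, ∀ w ∈ segment ℝ (xb t) (x t), ContinuousAt (u t) w :=
    hgrad.mono fun t ht w hw => (ht w hw).hasFDerivAt.continuousAt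
  refine (hK.integrable_mul (hx.sub hxb).norm).mono'
    ((aemeasurable_comp_of_continuousAt hu hx.1 (hcont.mono fun t ht => ht _ ?_)).sub
      (aemeasurable_comp_of_continuousAt hu hxb.1
        (hcont.mono fun t ht => ht _ ?_))).aestronglyMeasurable ?_
  · exact right_mem_segment ℝ _ _
  · exact left_mem_segment ℝ _ _
  filter_upwards [hgrad, hbound] with t hgt hbt
  exact (convex_segment _ _).abs_sub_le_of_norm_gradient_le hgt hbt
    (left_mem_segment ℝ _ _) (right_mem_segment ℝ _ _)

theorem integrable_inner_gradient (hu : ∀ w, Measurable fun t => u t w)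
    (hgrad : ∀ᵐ t ∂μ, ∀ w ∈ segment ℝ (xb t) (x t), HasGradientAt (u t) (G t w) w)
    (hbound : ∀ᵐ t ∂μ, ∀ w ∈ segment ℝ (xb t) (x t), ‖G t w‖ ≤ K t)
    (hK : MemLp K 2 μ) (hx : MemLp x 2 μ) (hxb : MemLp xb 2 μ) :
    Integrable (fun t => ⟪G t (xb t), x t - xb t⟫) μ := by
  refine (hK.integrable_mul (hx.sub hxb).norm).mono'
    (aemeasurable_inner_gradient hu hgrad hx.1 hxb.1).aestronglyMeasurable ?_
  filter_upwards [hbound] with t hbt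
  exact (abs_real_inner_le_norm _ _).trans
    (mul_le_mul_of_nonneg_right (hbt _ (left_mem_segment ℝ _ _)) (norm_nonneg _))

theorem integral_comp_le_of_concaveOn {S : Set E} (hS : Convex ℝ S)
    (hu : ∀ w, Measurable fun t => u t w) (hconc : ∀ᵐ t ∂μ, ConcaveOn ℝ S (u t))
    (hgrad : ∀ᵐ t ∂μ, ∀ w ∈ S, HasGradientAt (u t) (G t w) w)
    {C : ℝ} (hC : 0 ≤ C) {g : α → ℝ} (hg : MemLp g 2 μ)
    (hgrowth : ∀ᵐ t ∂μ, ∀ w ∈ S, ‖G t w‖ ≤ C * ‖w‖ + g t)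
    (hx : MemLp x 2 μ) (hxb : MemLp xb 2 μ) (hxS : ∀ᵐ t ∂μ, x t ∈ S) (hxbS : ∀ᵐ t ∂μ, xb t ∈ S)
    (hdir : ∫ t, ⟪G t (xb t), x t - xb t⟫ ∂μ ≤ 0) :
    ∫ t, u t (x t) ∂μ ≤ ∫ t, u t (xb t) ∂μ := by
  have hseg : ∀ᵐ t ∂μ, segment ℝ (xb t) (x t) ⊆ S := by
    filter_upwards [hxS, hxbS] with t hxt hxbt using hS.segment_subset hxbt hxt
  have hgrad_seg : ∀ᵐ t ∂μ, ∀ w ∈ segment ℝ (xb t) (x t), HasGradientAt (u t) (G t w) w := by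
    filter_upwards [hgrad, hseg] with t hgt hst using fun w hw => hgt w (hst hw)
  have hbound : ∀ᵐ t ∂μ, ∀ w ∈ segment ℝ (xb t) (x t),
      ‖G t w‖ ≤ C * (‖xb t‖ + ‖x t‖) + g t := by
    filter_upwards [hgrowth, hseg] with t hgt hst w hw
    have hw' : ‖w‖ ≤ ‖xb t‖ + ‖x t‖ :=
      ((convexOn_norm convex_univ).le_max_of_mem_segment trivial trivial hw).trans
        (max_le_add_of_nonneg (norm_nonneg _) (norm_nonneg _))
    exact (hgt w (hst hw)).trans (by gcongr)
  have hK : MemLp (fun t => C * (‖xb t‖ + ‖x t‖) + g t) 2 μ :=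
    ((hxb.norm.add hx.norm).const_mul C).add hg
  have hdiff := integrable_sub_comp_of_norm_gradient_le hu hgrad_seg hbound hK hx hxb
  refine integral_le_integral_of_integrable_sub hdiff ((integral_mono_ae hdiff
    (integrable_inner_gradient hu hgrad_seg hbound hK hx hxb) ?_).trans hdir)
  filter_upwards [hconc, hgrad, hxS, hxbS] with t hct hgt hxt hxbt
  linarith [hct.le_add_inner_of_hasGradientAt hxbt hxt (hgt _ hxbt)]

end ConcaveIntegrand

theorem convex_setOf_forall_apply_nonneg (ι : Type*) :
    Convex ℝ {w : EuclideanSpace ℝ ι | ∀ j, 0 ≤ w j} := fun _ hx _ hy a b ha hb _ j => by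
  simpa using add_nonneg (mul_nonneg ha (hx j)) (mul_nonneg hb (hy j))

section L2Coordinates

variable {α ι : Type*} [MeasurableSpace α] {μ : Measure α} [IsFiniteMeasure μ] [Fintype ι]

theorem integrable_apply (f : Lp (EuclideanSpace ℝ ι) 2 μ) (j : ι) :
    Integrable (fun t => f t j) μ := by
  simpa using (EuclideanSpace.proj (𝕜 := ℝ) j).integrable_comp
    ((Lp.memLp f).integrable one_le_two)

theorem integral_apply_le_integral_sum_apply {κ : Type*} [Fintype κ]
    {f : κ → Lp (EuclideanSpace ℝ ι) 2 μ} {j : ι} (hf : ∀ k, ∀ᵐ t ∂μ, 0 ≤ f k t j) (i : κ) :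
    ∫ t, f i t j ∂μ ≤ ∫ t, ∑ k, f k t j ∂μ := by
  rw [integral_finsetSum _ fun k _ => integrable_apply (f k) j]
  exact Finset.single_le_sum (fun k _ => integral_nonneg_of_ae (hf k)) (Finset.mem_univ i)

theorem integral_sum_sub_apply {κ : Type*} [Fintype κ] (f g : κ → Lp (EuclideanSpace ℝ ι) 2 μ)
    (j : ι) : ∫ t, ∑ i, (f i t j - g i t j) ∂μ = ∫ t, ∑ i, f i t j ∂μ - ∫ t, ∑ i, g i t j ∂μ := by
  simp only [Finset.sum_sub_distrib]
  exact integral_sub (integrable_finsetSum _ fun i _ => integrable_apply (f i) j)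
    (integrable_finsetSum _ fun i _ => integrable_apply (g i) j)

variable [DecidableEq ι]

variable (μ) in
def unitPrice (j : ι) : Lp (EuclideanSpace ℝ ι) 2 μ :=
  Lp.const 2 μ (EuclideanSpace.single j 1)

theorem integral_apply_eq_inner_unitPrice (f : Lp (EuclideanSpace ℝ ι) 2 μ) (j : ι) :
    ∫ t, f t j ∂μ = ⟪unitPrice μ j, f⟫ := by
  rw [unitPrice, ← indicatorConstLp_univ, L2.inner_indicatorConstLp_eq_setIntegral_inner,
    setIntegral_univ]
  simp [EuclideanSpace.inner_single_left]

theorem integral_sum_apply_eq_inner_unitPrice {κ : Type*} (s : Finset κ)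
    (f : κ → Lp (EuclideanSpace ℝ ι) 2 μ) (j : ι) :
    ∫ t, ∑ i ∈ s, f i t j ∂μ = ⟪unitPrice μ j, ∑ i ∈ s, f i⟫ := by
  rw [integral_finsetSum _ fun i _ => integrable_apply (f i) j, inner_sum]
  simp only [integral_apply_eq_inner_unitPrice]

theorem eq_unitPrice_of_ae_eq {p : Lp (EuclideanSpace ℝ ι) 2 μ} {j : ι}
    (hp : p =ᵐ[μ] fun _ => EuclideanSpace.single j 1) : p = unitPrice μ j :=
  Lp.ext (hp.trans (Lp.coeFn_const ..).symm)

end L2Coordinates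

theorem integral_inner_lineMap_sub {α E : Type*} [MeasurableSpace α] {μ : Measure α}
    [NormedAddCommGroup E] [InnerProductSpace ℝ E] (a : α → E) (xb x : Lp E 2 μ) (l : ℝ) :
    ∫ t, ⟪a t, AffineMap.lineMap xb x l t - xb t⟫ ∂μ = l * ∫ t, ⟪a t, x t - xb t⟫ ∂μ := by
  rw [← integral_const_mul]
  refine integral_congr_ae ?_
  filter_upwards [Lp.coeFn_add (l • (x - xb)) xb, Lp.coeFn_smul l (x - xb),
    Lp.coeFn_sub x xb] with t h1 h2 h3
  rw [AffineMap.lineMap_apply_module', h1, Pi.add_apply, h2, Pi.smul_apply, h3, Pi.sub_apply,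
    add_sub_cancel_right, real_inner_smul_right]

theorem inner_sum_le_inner_sum_of_budget {ι E : Type*} [Fintype ι] [NormedAddCommGroup E]
    [InnerProductSpace ℝ E] {p q : E} {x e : ι → E} (hbudget : ∀ i, ⟪p, x i - e i⟫ ≤ 0)
    (h : 0 ≤ ⟪∑ i, (e i - x i), q - p⟫) : ⟪q, ∑ i, x i⟫ ≤ ⟪q, ∑ i, e i⟫ := by
  have hp : ⟪∑ i, (e i - x i), p⟫ = -∑ i, ⟪p, x i - e i⟫ := by
    rw [sum_inner, ← Finset.sum_neg_distrib]
    exact Finset.sum_congr rfl fun i _ => by rw [real_inner_comm, ← neg_sub, inner_neg_right]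
  rw [inner_sub_right, hp] at h
  have hq : ⟪q, ∑ i, e i⟫ - ⟪q, ∑ i, x i⟫ = ⟪∑ i, (e i - x i), q⟫ := by
    rw [← inner_sub_right, ← Finset.sum_sub_distrib, real_inner_comm]
  linarith [Finset.sum_nonpos fun i (_ : i ∈ Finset.univ) => hbudget i]

section QVI

variable {ι P Y : Type*} [Fintype ι] {D : Set P} {K : ι → Set Y} {a : P → ℝ}
  {φ : ι → Y → ℝ} {xb : ι → Y}

theorem forall_nonneg_left_of_forall_nonneg_add_sum
    (h : ∀ p ∈ D, ∀ y : ι → Y, (∀ i, y i ∈ K i) → 0 ≤ a p + ∑ i, φ i (y i))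
    (hxb : ∀ i, xb i ∈ K i) (hφ : ∀ i, φ i (xb i) = 0) : ∀ p ∈ D, 0 ≤ a p := fun p hp => by
  simpa [hφ] using h p hp xb hxb

theorem forall_nonneg_component_of_forall_nonneg_add_sum [DecidableEq ι]
    (h : ∀ p ∈ D, ∀ y : ι → Y, (∀ i, y i ∈ K i) → 0 ≤ a p + ∑ i, φ i (y i))
    {pb : P} (hpb : pb ∈ D) (ha : a pb = 0) (hxb : ∀ i, xb i ∈ K i) (hφ : ∀ i, φ i (xb i) = 0) :
    ∀ i, ∀ z ∈ K i, 0 ≤ φ i z := fun i z hz => by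
  have hy : ∀ k, Function.update xb i z k ∈ K k := fun k => by
    rcases eq_or_ne k i with rfl | hk
    · simpa using hz
    · simpa [hk] using hxb k
  have := h pb hpb _ hy
  rwa [ha, zero_add, Finset.sum_eq_single i (fun k _ hk => by simp [hk, hφ]) (by simp),
    Function.update_self] at this

end QVI

section Economy

variable {m : ℕ} {T : ℝ}

theorem convex_CL : Convex ℝ (CL m T) := fun x hx y hy a b ha hb _ j => by
  filter_upwards [Lp.coeFn_add (a • x) (b • y), Lp.coeFn_smul a x, Lp.coeFn_smul b y, hx j, hy j]
    with t h1 h2 h3 hxt hyt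
  rw [h1, Pi.add_apply, h2, h3]
  simpa using add_nonneg (mul_nonneg ha hxt) (mul_nonneg hb hyt)

theorem convex_budgetSet (e p : EcoL m T) : Convex ℝ (budgetSet m T e p) := by
  have hhalf : Convex ℝ {x : EcoL m T | ⟪p, x - e⟫ ≤ 0} := by
    simp_rw [inner_sub_right, sub_nonpos]
    exact convex_halfSpace_le (innerₗ (EcoL m T) p).isLinear ⟪p, e⟫
  exact convex_CL.inter hhalf

theorem exists_lineMap_mem_truncBudget {e p xb x : EcoL m T} {r : Fin m → ℝ}
    (hxb : xb ∈ truncBudget m T e r p) (hlt : ∀ j, ∫ t, xb t j ∂(timeMeasure T) < r j)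
    (hx : x ∈ budgetSet m T e p) :
    ∃ l ∈ Set.Ioc (0 : ℝ) 1, AffineMap.lineMap xb x l ∈ truncBudget m T e r p := by
  have hsmall : ∀ᶠ l in 𝓝[>] (0 : ℝ), l ∈ Set.Ioc 0 1 ∧
      ∀ j, ∫ t, AffineMap.lineMap xb x l t j ∂(timeMeasure T) < r j := by
    refine Eventually.and (Ioc_mem_nhdsGT one_pos) (eventually_all.2 fun j => ?_)
    simp only [integral_apply_eq_inner_unitPrice, AffineMap.lineMap_apply_module,
      inner_add_right, real_inner_smul_right] at hlt ⊢
    have hcont : Continuous fun l : ℝ =>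
        (1 - l) * ⟪unitPrice (timeMeasure T) j, xb⟫ + l * ⟪unitPrice (timeMeasure T) j, x⟫ := by fun_prop
    exact (hcont.tendsto' 0 _ (by simp)).eventually (gt_mem_nhds (hlt j))
      |>.filter_mono nhdsWithin_le_nhds
  obtain ⟨l, hl, hlr⟩ := hsmall.exists
  have hmem := (convex_budgetSet e p).lineMap_mem hxb.1 hx ⟨hl.1.le, hl.2⟩
  exact ⟨l, hl, hmem, fun j => ⟨hmem.1 j, (hlr j).le⟩⟩

theorem integral_inner_sub_nonneg_of_mem_budgetSet {e p xb x : EcoL m T} {r : Fin m → ℝ}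
    {a : ℝ → EuclideanSpace ℝ (Fin m)}
    (hxb : xb ∈ truncBudget m T e r p) (hlt : ∀ j, ∫ t, xb t j ∂(timeMeasure T) < r j)
    (h : ∀ z ∈ truncBudget m T e r p, 0 ≤ ∫ t, ⟪a t, z t - xb t⟫ ∂(timeMeasure T))
    (hx : x ∈ budgetSet m T e p) : 0 ≤ ∫ t, ⟪a t, x t - xb t⟫ ∂(timeMeasure T) := by
  obtain ⟨l, hl, hmem⟩ := exists_lineMap_mem_truncBudget hxb hlt hx
  have := h _ hmem
  rw [integral_inner_lineMap_sub] at this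
  exact nonneg_of_mul_nonneg_right this hl.1

end Economy

theorem qvi_solution_is_dynamic_competitive_equilibrium_general
    (m n : ℕ) (T : ℝ)
    (u : Fin n → ℝ → EuclideanSpace ℝ (Fin m) → ℝ)
    (G : Fin n → ℝ → EuclideanSpace ℝ (Fin m) → EuclideanSpace ℝ (Fin m))
    (hA1 : ∀ i, AssumptionA1 m T (u i) (G i))
    (e : Fin n → EcoL m T)
    (r : Fin m → ℝ) (hr : ∀ j, ∫ t, (∑ i, e i t j) ∂(timeMeasure T) < r j)
    (Dt : Set (EcoL m T))
    (hcoord : ∀ j : Fin m, ∃ pj ∈ Dt,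
      (pj : ℝ → EuclideanSpace ℝ (Fin m)) =ᵐ[timeMeasure T]
        fun _ => EuclideanSpace.single j (1:ℝ))
    (pbar : EcoL m T) (hpbar : pbar ∈ Dt)
    (xbar : Fin n → EcoL m T)
    (hxbar : ∀ i, xbar i ∈ truncBudget m T (e i) r pbar)
    (hQVI : ∀ p ∈ Dt, ∀ y : Fin n → EcoL m T,
      (∀ i, y i ∈ truncBudget m T (e i) r pbar) →
      0 ≤ ⟪∑ i, (e i - xbar i), p - pbar⟫ +
        ∑ i, ∫ t, ⟪-(G i t (xbar i t)), y i t - xbar i t⟫ ∂(timeMeasure T)) :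
    (∀ i, xbar i ∈ budgetSet m T (e i) pbar ∧
      ∀ x ∈ budgetSet m T (e i) pbar,
        meanUtility m T (u i) x ≤ meanUtility m T (u i) (xbar i)) ∧
    (∀ j, ∫ t, (∑ i, (xbar i t j - e i t j)) ∂(timeMeasure T) ≤ 0) := by
  set φ : Fin n → EcoL m T → ℝ :=
    fun i z => ∫ t, ⟪-(G i t (xbar i t)), z t - xbar i t⟫ ∂(timeMeasure T)
  have hprice : ∀ p ∈ Dt, 0 ≤ ⟪∑ i, (e i - xbar i), p - pbar⟫ :=
    forall_nonneg_left_of_forall_nonneg_add_sum (φ := φ) hQVI hxbar (by simp [φ])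
  have hdemand : ∀ i, ∀ z ∈ truncBudget m T (e i) r pbar, 0 ≤ φ i z :=
    forall_nonneg_component_of_forall_nonneg_add_sum hQVI hpbar (by simp) hxbar (by simp [φ])
  have hclear : ∀ j,
      ∫ t, ∑ i, xbar i t j ∂(timeMeasure T) ≤ ∫ t, ∑ i, e i t j ∂(timeMeasure T) := by
    intro j
    obtain ⟨pj, hpj, hpj_eq⟩ := hcoord j
    rw [eq_unitPrice_of_ae_eq hpj_eq] at hpj
    simpa only [integral_sum_apply_eq_inner_unitPrice] using
      inner_sum_le_inner_sum_of_budget (fun i => (hxbar i).1.2) (hprice _ hpj)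
  have hlt : ∀ i j, ∫ t, xbar i t j ∂(timeMeasure T) < r j := fun i j =>
    calc ∫ t, xbar i t j ∂(timeMeasure T)
        ≤ ∫ t, ∑ k, xbar k t j ∂(timeMeasure T) :=
          integral_apply_le_integral_sum_apply (fun k => (hxbar k).1.1 j) i
      _ ≤ _ := hclear j
      _ < r j := hr j
  refine ⟨fun i => ⟨(hxbar i).1, fun x hx => ?_⟩, fun j => ?_⟩
  · obtain ⟨hu, hconc, hgrad, -, C, hC, g, hg, -, hgrowth⟩ := hA1 i
    have hdir := integral_inner_sub_nonneg_of_mem_budgetSet (hxbar i) (hlt i) (hdemand i) hx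
    simp only [inner_neg_left, integral_neg, neg_nonneg] at hdir
    exact integral_comp_le_of_concaveOn (convex_setOf_forall_apply_nonneg _) hu hconc hgrad
      hC.le hg hgrowth (Lp.memLp x) (Lp.memLp (xbar i)) (ae_all_iff.2 hx.1)
      (ae_all_iff.2 (hxbar i).1.1) hdir
  · rw [integral_sum_sub_apply]
    exact sub_nonpos.2 (hclear j)

/-- **Lemma (a QVI solution is a dynamic competitive equilibrium).**
Assume each `u i` satisfies (A1) (with gradient `G i`), the endowments `e i` lie in `C_L`,
and `r j > ∫₀ᵀ Σ_i e_iʲ(t) dt` for every good `j`. If `(p̄, x̄) ∈ D̃ × ∏_i K̃_i(p̄)` solves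
the quasi-variational inequality
`⟪Σ_i (e_i − x̄_i), p − p̄⟫ + Σ_i ⟪−∇u_i(·, x̄_i(·)), y_i − x̄_i⟫ ≥ 0`
for all `(p, y) ∈ D̃ × ∏_i K̃_i(p̄)`, then `(p̄, x̄)` is a dynamic competitive equilibrium:
each `x̄_i` maximizes `𝒰_i` over `M_i(p̄)`, and
`∫₀ᵀ Σ_i (x̄_iʲ(t) − e_iʲ(t)) dt ≤ 0` for every good `j`. -/
theorem qvi_solution_is_dynamic_competitive_equilibrium
    (m n : ℕ) (T : ℝ) (hT : 0 < T)
    (u : Fin n → ℝ → EuclideanSpace ℝ (Fin m) → ℝ)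
    (G : Fin n → ℝ → EuclideanSpace ℝ (Fin m) → EuclideanSpace ℝ (Fin m))
    (hA1 : ∀ i, AssumptionA1 m T (u i) (G i))
    (e : Fin n → EcoL m T) (he : ∀ i, e i ∈ CL m T)
    (r : Fin m → ℝ) (hr : ∀ j, ∫ t, (∑ i, e i t j) ∂(timeMeasure T) < r j)
    (Dt : Set (EcoL m T))
    (hDt : ∀ p ∈ Dt, (∀ j, ∀ᵐ t ∂(timeMeasure T), 0 ≤ p t j) ∧
      (∀ᵐ t ∂(timeMeasure T), ∑ j, p t j = 1))
    (hcoord : ∀ j : Fin m, ∃ pj ∈ Dt,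
      (pj : ℝ → EuclideanSpace ℝ (Fin m)) =ᵐ[timeMeasure T]
        fun _ => EuclideanSpace.single j (1:ℝ))
    (pbar : EcoL m T) (hpbar : pbar ∈ Dt)
    (xbar : Fin n → EcoL m T)
    (hxbar : ∀ i, xbar i ∈ truncBudget m T (e i) r pbar)
    (hQVI : ∀ p ∈ Dt, ∀ y : Fin n → EcoL m T,
      (∀ i, y i ∈ truncBudget m T (e i) r pbar) →
      0 ≤ ⟪∑ i, (e i - xbar i), p - pbar⟫ +
        ∑ i, ∫ t, ⟪-(G i t (xbar i t)), y i t - xbar i t⟫ ∂(timeMeasure T)) :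
    (∀ i, xbar i ∈ budgetSet m T (e i) pbar ∧
      ∀ x ∈ budgetSet m T (e i) pbar,
        meanUtility m T (u i) x ≤ meanUtility m T (u i) (xbar i)) ∧
    (∀ j, ∫ t, (∑ i, (xbar i t j - e i t j)) ∂(timeMeasure T) ≤ 0) :=
  qvi_solution_is_dynamic_competitive_equilibrium_general m n T u G hA1 e r hr Dt hcoord pbar hpbar
    xbar hxbar hQVI
end
end

section
/- In the time-dependent pure exchange economy, let p̄ ∈ D̃ and x̄ with x̄_i ∈ M_i(p̄) for each i satisfy the price variational inequality ⟪Σ_{i=1}^{n}(e_i − x̄_i), p − p̄⟫_m ≥ 0 for all p ∈ D̃. Then the market clearing condition holds: ∫_0^T Σ_{i=1}^{n} (x̄_i^j(t) − e_i^j(t)) dt ≤ 0 for every good j ∈ {1,…,m}. -/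
/-!
STATEMENT 10: In the time-dependent pure exchange economy, if the price `p̄ ∈ D̃` together
with consumptions `x̄_i ∈ M_i(p̄)` satisfies the price variational inequality over `D̃`,
then the market clearing condition holds.

The price set `D̃` is abstracted as a set `Dt` of prices whose members are nonnegative with
components summing to one a.e., and which contains, for each good `j`, the constant unit
price of good `j` (these are the defining properties of `D̃` used here).
-/

open MeasureTheory
open scoped RealInnerProductSpace

noncomputable section

namespace MarketClearing

section InnerProduct

variable {E ι : Type*} [NormedAddCommGroup E] [InnerProductSpace ℝ E]

/-- Budget feasibility makes the excess demand have nonpositive value at `p`, and the variational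
inequality says no price `q` values it more than `p` does. -/
theorem inner_sum_sub_nonpos_of_budget_of_vi (s : Finset ι) {x e : ι → E} {p q : E}
    (hbudget : ∀ i ∈ s, ⟪p, x i - e i⟫ ≤ 0) (hvi : 0 ≤ ⟪∑ i ∈ s, (e i - x i), q - p⟫) :
    ⟪∑ i ∈ s, (x i - e i), q⟫ ≤ 0 := by
  have hsum : ∑ i ∈ s, (e i - x i) = -∑ i ∈ s, (x i - e i) := by
    rw [← Finset.sum_neg_distrib]
    simp only [neg_sub]
  have hvalue : ⟪∑ i ∈ s, (x i - e i), p⟫ ≤ 0 := by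
    rw [sum_inner]
    exact Finset.sum_nonpos fun i hi => real_inner_comm p (x i - e i) ▸ hbudget i hi
  rw [hsum, inner_neg_left, inner_sub_right] at hvi
  linarith

end InnerProduct

section Coordinates

variable {α ι : Type*} [MeasurableSpace α] {μ : Measure α} [Fintype ι] [DecidableEq ι]
  {q : Lp (EuclideanSpace ℝ ι) 2 μ} {j : ι}

theorem inner_ae_eq_coord_of_ae_eq_single (f : Lp (EuclideanSpace ℝ ι) 2 μ)
    (hq : q =ᵐ[μ] fun _ => EuclideanSpace.single j 1) :
    (fun t => ⟪f t, q t⟫) =ᵐ[μ] fun t => f t j := by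
  filter_upwards [hq] with t ht
  simp [ht, EuclideanSpace.inner_single_right]

theorem integrable_coord_of_ae_eq_single (f : Lp (EuclideanSpace ℝ ι) 2 μ)
    (hq : q =ᵐ[μ] fun _ => EuclideanSpace.single j 1) :
    Integrable (fun t => f t j) μ :=
  (L2.integrable_inner f q).congr (inner_ae_eq_coord_of_ae_eq_single f hq)

theorem integral_coord_eq_inner_of_ae_eq_single (f : Lp (EuclideanSpace ℝ ι) 2 μ)
    (hq : q =ᵐ[μ] fun _ => EuclideanSpace.single j 1) :
    ∫ t, f t j ∂μ = ⟪f, q⟫ := by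
  rw [L2.inner_def]
  exact (integral_congr_ae (inner_ae_eq_coord_of_ae_eq_single f hq)).symm

end Coordinates

end MarketClearing

open MarketClearing in
theorem market_clearing_of_price_vi_general
    (m n : ℕ) (T : ℝ)
    (e : Fin n → EcoL m T)
    (Dt : Set (EcoL m T))
    (hcoord : ∀ j : Fin m, ∃ pj ∈ Dt,
      (pj : ℝ → EuclideanSpace ℝ (Fin m)) =ᵐ[timeMeasure T]
        fun _ => EuclideanSpace.single j (1:ℝ))
    (pbar : EcoL m T)
    (xbar : Fin n → EcoL m T)
    (hxbar : ∀ i, xbar i ∈ budgetSet m T (e i) pbar)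
    (hVI : ∀ p ∈ Dt, 0 ≤ ⟪∑ i, (e i - xbar i), p - pbar⟫) :
    ∀ j, ∫ t, (∑ i, (xbar i t j - e i t j)) ∂(timeMeasure T) ≤ 0 := by
  intro j
  obtain ⟨pj, hpjD, hpj⟩ := hcoord j
  have hsub : ∀ i, (fun t => xbar i t j - e i t j) =ᵐ[timeMeasure T]
      fun t => (xbar i - e i) t j := fun i => by
    filter_upwards [Lp.coeFn_sub (xbar i) (e i)] with t ht
    rw [ht]
    rfl
  calc ∫ t, (∑ i, (xbar i t j - e i t j)) ∂(timeMeasure T)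
      = ∑ i, ∫ t, (xbar i - e i) t j ∂(timeMeasure T) := by
        rw [integral_finsetSum _ fun i _ =>
          (integrable_coord_of_ae_eq_single _ hpj).congr (hsub i).symm]
        exact Finset.sum_congr rfl fun i _ => integral_congr_ae (hsub i)
    _ = ⟪∑ i, (xbar i - e i), pj⟫ := by
        simp only [integral_coord_eq_inner_of_ae_eq_single _ hpj, sum_inner]
    _ ≤ 0 := inner_sum_sub_nonpos_of_budget_of_vi _ (fun i _ => (hxbar i).2) (hVI pj hpjD)

/-- **Lemma (market clearing from the price variational inequality).**
Let `p̄ ∈ D̃` and `x̄` with `x̄_i ∈ M_i(p̄)` for each agent `i` satisfy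
`⟪Σ_i (e_i − x̄_i), p − p̄⟫ ≥ 0` for all `p ∈ D̃`. Then
`∫₀ᵀ Σ_i (x̄_iʲ(t) − e_iʲ(t)) dt ≤ 0` for every good `j`. -/
theorem market_clearing_of_price_vi
    (m n : ℕ) (T : ℝ) (hT : 0 < T)
    (e : Fin n → EcoL m T) (he : ∀ i, e i ∈ CL m T)
    (Dt : Set (EcoL m T))
    (hDt : ∀ p ∈ Dt, (∀ j, ∀ᵐ t ∂(timeMeasure T), 0 ≤ p t j) ∧
      (∀ᵐ t ∂(timeMeasure T), ∑ j, p t j = 1))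
    (hcoord : ∀ j : Fin m, ∃ pj ∈ Dt,
      (pj : ℝ → EuclideanSpace ℝ (Fin m)) =ᵐ[timeMeasure T]
        fun _ => EuclideanSpace.single j (1:ℝ))
    (pbar : EcoL m T) (hpbar : pbar ∈ Dt)
    (xbar : Fin n → EcoL m T)
    (hxbar : ∀ i, xbar i ∈ budgetSet m T (e i) pbar)
    (hVI : ∀ p ∈ Dt, 0 ≤ ⟪∑ i, (e i - xbar i), p - pbar⟫) :
    ∀ j, ∫ t, (∑ i, (xbar i t j - e i t j)) ∂(timeMeasure T) ≤ 0 :=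
  market_clearing_of_price_vi_general m n T e Dt hcoord pbar xbar hxbar hVI
end
end
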